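/- arXiv:1411.2876 — 4 statements merged into one kernel-verified Lean document; each statement's English description precedes it below -/
import Mathlib

section
/- Let p ∈ [1,2] and define α_i = (1/a)((i+p)/p)^{p-1} for i ≥ 0 with a ≥ 1. Then A_k := Σ_{i=0}^k α_i ≥ (1/a)((k+p)/p)^p for every integer k ≥ 0. -/
lemma Real.rpow_sub_rpow_le_mul_rpow_sub_one_mul {p u v : ℝ} (hp : 1 ≤ p) (hu : 0 ≤ u)
    (huv : u < v) : v ^ p - u ^ p ≤ p * v ^ (p - 1) * (v - u) := by
  have hslope : slope (fun x : ℝ ↦ x ^ p) u v ≤ p * v ^ (p - 1) :=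
    (convexOn_rpow hp).slope_le_of_hasDerivAt hu (hu.trans huv.le) huv
      (Real.hasDerivAt_rpow_const (Or.inr hp))
  rwa [slope_def_field, div_le_iff₀ (sub_pos.mpr huv)] at hslope

/-- Telescoping the convexity bound `(x + 1/p)^p - x^p ≤ (x + 1/p)^(p-1)`: each summand dominates
the integral of `((x + p)/p)^(p-1)` over the preceding unit interval. -/
lemma rpow_le_sum_range_rpow_sub_one {p : ℝ} (hp : 1 ≤ p) (k : ℕ) :
    (((k : ℝ) + p) / p) ^ p ≤ ∑ i ∈ Finset.range (k + 1), (((i : ℝ) + p) / p) ^ (p - 1) := by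
  have hp0 : 0 < p := one_pos.trans_le hp
  induction k with
  | zero => simp [hp0.ne']
  | succ k ih =>
    set u := ((k : ℝ) + p) / p
    set v := (((k + 1 : ℕ) : ℝ) + p) / p
    have hvu : v - u = 1 / p := by
      simp only [u, v]; push_cast; field_simp; ring
    have hstep : v ^ p - u ^ p ≤ v ^ (p - 1) := by
      have huv : u < v := sub_pos.mp (hvu ▸ one_div_pos.mpr hp0)
      calc v ^ p - u ^ p ≤ p * v ^ (p - 1) * (v - u) :=
            Real.rpow_sub_rpow_le_mul_rpow_sub_one_mul hp (by positivity) huv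
        _ = v ^ (p - 1) := by rw [hvu]; field_simp
    rw [Finset.sum_range_succ]
    linarith

open Finset in
theorem stmt_4_general (p a : ℝ) (hp1 : 1 ≤ p) (ha : 1 ≤ a)
    (α : ℕ → ℝ) (hα : ∀ i, α i = (1 / a) * (((i : ℝ) + p) / p) ^ (p - 1))
    (A : ℕ → ℝ) (hA : ∀ k, A k = ∑ i ∈ range (k + 1), α i) :
    ∀ k : ℕ, A k ≥ (1 / a) * (((k : ℝ) + p) / p) ^ p := by
  intro k
  have ha0 : 0 ≤ 1 / a := by positivity
  simpa only [hA, hα, ← mul_sum] using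
    mul_le_mul_of_nonneg_left (rpow_le_sum_range_rpow_sub_one hp1 k) ha0

open Finset in
/-- With `α_i = (1/a)((i+p)/p)^(p-1)`, `p ∈ [1,2]`, `a ≥ 1`, the partial sums
`A_k = Σ_{i=0}^k α_i` satisfy `A_k ≥ (1/a)((k+p)/p)^p`. -/
theorem stmt_4 (p a : ℝ) (hp1 : 1 ≤ p) (hp2 : p ≤ 2) (ha : 1 ≤ a)
    (α : ℕ → ℝ) (hα : ∀ i, α i = (1 / a) * (((i : ℝ) + p) / p) ^ (p - 1))
    (A : ℕ → ℝ) (hA : ∀ k, A k = ∑ i ∈ range (k + 1), α i) :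
    ∀ k : ℕ, A k ≥ (1 / a) * (((k : ℝ) + p) / p) ^ p :=
  stmt_4_general p a hp1 ha α hα A hA
end

section
/- Let p ∈ [1,2], a = 2^{(2p-1)/2}, α_i = (1/a)((i+p)/p)^{p-1}, B_i = aα_i², and A_k = Σ_{i=0}^k α_i. Then for all k ≥ 0 and δ ≥ 0: (δ/A_k)·Σ_{i=0}^k B_i ≤ 2^{2p-1}(((k+p)/p)^{p-1} + 1)·δ. -/
open Finset

lemma sum_mul_le_mul_sum {ι : Type*} (s : Finset ι) (w x : ι → ℝ) (C : ℝ)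
    (hw : ∀ i ∈ s, 0 ≤ w i) (hx : ∀ i ∈ s, x i ≤ C) :
    ∑ i ∈ s, w i * x i ≤ C * ∑ i ∈ s, w i := by
  rw [mul_sum]
  exact sum_le_sum fun i hi => by nlinarith [hw i hi, hx i hi]

lemma div_sum_mul_sum_mul_le {ι : Type*} {s : Finset ι} (hs : s.Nonempty) {w x : ι → ℝ}
    {C δ : ℝ} (hδ : 0 ≤ δ) (hw : ∀ i ∈ s, 0 < w i) (hx : ∀ i ∈ s, x i ≤ C) :
    (δ / ∑ i ∈ s, w i) * ∑ i ∈ s, w i * x i ≤ δ * C := by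
  have hW : 0 < ∑ i ∈ s, w i := sum_pos hw hs
  rw [div_mul_eq_mul_div, div_le_iff₀ hW, mul_assoc]
  exact mul_le_mul_of_nonneg_left
    (sum_mul_le_mul_sum s w x C (fun i hi => (hw i hi).le) hx) hδ

lemma one_le_add_div_self {p x : ℝ} (hp : 0 < p) (hx : 0 ≤ x) : 1 ≤ (x + p) / p := by
  rw [le_div_iff₀ hp]
  linarith

lemma rpow_add_div_self_le {p q x y : ℝ} (hp : 0 < p) (hq : 0 ≤ q) (hx : 0 ≤ x)
    (hxy : x ≤ y) : ((x + p) / p) ^ q ≤ ((y + p) / p) ^ q := by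
  gcongr

lemma one_le_two_rpow_two_mul_sub_one {p : ℝ} (hp : 1 ≤ p) : 1 ≤ (2 : ℝ) ^ (2 * p - 1) :=
  Real.one_le_rpow one_le_two (by linarith)

lemma mul_le_mul_add_one_mul {c C δ : ℝ} (hc : 1 ≤ c) (hC : 0 ≤ C) (hδ : 0 ≤ δ) :
    δ * C ≤ c * (C + 1) * δ := by
  nlinarith [mul_nonneg hδ hC]

open Finset in
theorem stmt_6_general (p : ℝ) (hp1 : 1 ≤ p)
    (a : ℝ) (haa : a = (2 : ℝ) ^ ((2 * p - 1) / 2))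
    (α : ℕ → ℝ) (hα : ∀ i, α i = (1 / a) * (((i : ℝ) + p) / p) ^ (p - 1))
    (B : ℕ → ℝ) (hB : ∀ i, B i = a * (α i) ^ 2)
    (A : ℕ → ℝ) (hA : ∀ k, A k = ∑ i ∈ range (k + 1), α i)
    (δ : ℝ) (hδ : 0 ≤ δ) :
    ∀ k : ℕ, δ / A k * ∑ i ∈ range (k + 1), B i ≤
      (2 : ℝ) ^ (2 * p - 1) * ((((k : ℝ) + p) / p) ^ (p - 1) + 1) * δ := by
  intro k
  have hp : 0 < p := by linarith
  have ha : 0 < a := haa ▸ Real.rpow_pos_of_pos two_pos _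
  set x : ℕ → ℝ := fun i => (((i : ℝ) + p) / p) ^ (p - 1)
  have hx_pos (i : ℕ) : 0 < x i :=
    Real.rpow_pos_of_pos (one_pos.trans_le (one_le_add_div_self hp i.cast_nonneg)) _
  -- So `∑ B i` is an `α`-weighted sum of the increasing `x i`, hence at most `x k * A k`.
  have hB_eq (i : ℕ) : B i = α i * x i := by
    rw [hB, hα]
    field_simp
    rfl
  have hx_le (i : ℕ) (hi : i ∈ range (k + 1)) : x i ≤ x k :=
    rpow_add_div_self_le hp (by linarith) i.cast_nonneg
      (by exact_mod_cast Nat.lt_succ_iff.mp (mem_range.mp hi))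
  have hα_pos (i : ℕ) (_ : i ∈ range (k + 1)) : 0 < α i := by
    rw [hα]
    exact mul_pos (by positivity) (hx_pos i)
  calc δ / A k * ∑ i ∈ range (k + 1), B i
      = (δ / ∑ i ∈ range (k + 1), α i) * ∑ i ∈ range (k + 1), α i * x i := by
        simp only [hA, hB_eq]
    _ ≤ δ * x k := div_sum_mul_sum_mul_le nonempty_range_add_one hδ hα_pos hx_le
    _ ≤ _ := mul_le_mul_add_one_mul (one_le_two_rpow_two_mul_sub_one hp1) (hx_pos k).le hδ

open Finset in
/-- With the sequences of the SIGM coefficients,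
`(δ/A_k)·Σ_{i=0}^k B_i ≤ 2^(2p-1)(((k+p)/p)^(p-1) + 1)·δ` for all `k ≥ 0`, `δ ≥ 0`. -/
theorem stmt_6 (p : ℝ) (hp1 : 1 ≤ p) (hp2 : p ≤ 2)
    (a : ℝ) (haa : a = (2 : ℝ) ^ ((2 * p - 1) / 2))
    (α : ℕ → ℝ) (hα : ∀ i, α i = (1 / a) * (((i : ℝ) + p) / p) ^ (p - 1))
    (B : ℕ → ℝ) (hB : ∀ i, B i = a * (α i) ^ 2)
    (A : ℕ → ℝ) (hA : ∀ k, A k = ∑ i ∈ range (k + 1), α i)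
    (δ : ℝ) (hδ : 0 ≤ δ) :
    ∀ k : ℕ, δ / A k * ∑ i ∈ range (k + 1), B i ≤
      (2 : ℝ) ^ (2 * p - 1) * ((((k : ℝ) + p) / p) ^ (p - 1) + 1) * δ :=
  stmt_6_general p hp1 a haa α hα B hB A hA δ hδ
end

section
/- Let p ∈ [1,2], a = 2^{(2p-1)/2}, α_i = (1/a)((i+p)/p)^{p-1}, A_k = Σ_{i=0}^k α_i. Then for all k ≥ 0: (1/A_k²)·Σ_{i=0}^k α_i² ≤ 2p/(k+p). -/
/-!
With `x i = (i + p) / p` and `w i = x i ^ (p - 1)`, the weights are `α i = w i / a`, and the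
ratio `(∑ α i ^ 2) / (∑ α i) ^ 2` does not change when all weights are scaled by `1 / a`.
Bernoulli's inequality gives `x (i + 1) ^ p - x i ^ p ≤ w (i + 1)`, so telescoping yields
`x k ^ p ≤ ∑_{i ≤ k} w i`. Since `w` is increasing, `∑ w i ^ 2 ≤ w k * ∑ w i`, and
`w k = p / (k + p) * x k ^ p ≤ p / (k + p) * ∑ w i`; hence the ratio is at most `p / (k + p)`.
-/

open Finset

/-- A form of the convexity bound `x ^ p - y ^ p ≤ p x ^ (p - 1) (x - y)` for `x = y + p⁻¹`. -/
lemma add_inv_rpow_sub_rpow_sub_one_le {p y : ℝ} (hp : 1 ≤ p) (hy : 0 ≤ y) :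
    (y + p⁻¹) ^ p - (y + p⁻¹) ^ (p - 1) ≤ y ^ p := by
  set x := y + p⁻¹ with hx_def
  have hp0 : 0 < p := by linarith
  have hx : 0 < x := by positivity
  have hbern := one_add_mul_self_le_rpow_one_add
    (show -1 ≤ y / x - 1 by linarith [div_nonneg hy hx.le]) hp
  have hpx : p * (y / x - 1) = -x⁻¹ := by
    rw [hx_def]; field_simp; ring
  rw [add_sub_cancel, hpx, Real.div_rpow hy hx.le, le_div_iff₀ (by positivity)] at hbern
  calc x ^ p - x ^ (p - 1) = (1 + -x⁻¹) * x ^ p := by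
        rw [Real.rpow_sub_one hx.ne']; ring
    _ ≤ y ^ p := hbern

lemma rpow_le_sum_rpow_sub_one {p : ℝ} (hp : 1 ≤ p) (k : ℕ) :
    (((k : ℝ) + p) / p) ^ p ≤ ∑ i ∈ range (k + 1), (((i : ℝ) + p) / p) ^ (p - 1) := by
  have hp0 : 0 < p := by linarith
  induction k with
  | zero => simp [div_self hp0.ne']
  | succ k ih =>
    have hstep : (((k + 1 : ℕ) : ℝ) + p) / p = ((k : ℝ) + p) / p + p⁻¹ := by
      push_cast; field_simp; ring
    have := add_inv_rpow_sub_rpow_sub_one_le hp (show 0 ≤ ((k : ℝ) + p) / p by positivity)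
    rw [sum_range_succ, hstep]
    linarith

lemma one_div_sq_sum_mul_sum_sq_le {f : ℕ → ℝ} {c : ℝ} {k : ℕ} (hc : 0 ≤ c)
    (hf0 : ∀ i, 0 ≤ f i) (hf : Monotone f) (hk : f k ≤ c * ∑ i ∈ range (k + 1), f i) :
    1 / (∑ i ∈ range (k + 1), f i) ^ 2 * ∑ i ∈ range (k + 1), f i ^ 2 ≤ c := by
  set S := ∑ i ∈ range (k + 1), f i
  rcases (sum_nonneg fun i _ => hf0 i : 0 ≤ S).eq_or_lt with hS | hS
  · rw [show S = 0 from hS.symm]; simpa using hc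
  have hsq : ∑ i ∈ range (k + 1), f i ^ 2 ≤ f k * S := by
    rw [mul_sum]
    refine sum_le_sum fun i hi => ?_
    rw [sq]
    exact mul_le_mul_of_nonneg_right (hf (Nat.lt_succ_iff.mp (mem_range.mp hi))) (hf0 i)
  calc 1 / S ^ 2 * ∑ i ∈ range (k + 1), f i ^ 2 ≤ 1 / S ^ 2 * (f k * S) := by gcongr
    _ = f k / S := by field_simp
    _ ≤ c := by rwa [div_le_iff₀ hS]

lemma one_div_sq_sum_mul_sum_sq_const_mul_le {ι : Type*} {s : Finset ι} {f : ι → ℝ} {B : ℝ}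
    (c : ℝ) (hB : 0 ≤ B) (h : 1 / (∑ i ∈ s, f i) ^ 2 * ∑ i ∈ s, f i ^ 2 ≤ B) :
    1 / (∑ i ∈ s, c * f i) ^ 2 * ∑ i ∈ s, (c * f i) ^ 2 ≤ B := by
  rcases eq_or_ne c 0 with rfl | hc
  · simpa using hB
  have hscale : 1 / (∑ i ∈ s, c * f i) ^ 2 * ∑ i ∈ s, (c * f i) ^ 2
      = 1 / (∑ i ∈ s, f i) ^ 2 * ∑ i ∈ s, f i ^ 2 := by
    simp only [← mul_sum, mul_pow]
    rw [one_div_mul_eq_div, one_div_mul_eq_div, mul_div_mul_left _ _ (pow_ne_zero 2 hc)]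
  exact hscale ▸ h

lemma one_div_sq_sum_mul_sum_sq_rpow_sub_one_le {p : ℝ} (hp : 1 ≤ p) (k : ℕ) :
    1 / (∑ i ∈ range (k + 1), (((i : ℝ) + p) / p) ^ (p - 1)) ^ 2 *
      ∑ i ∈ range (k + 1), ((((i : ℝ) + p) / p) ^ (p - 1)) ^ 2 ≤ p / ((k : ℝ) + p) := by
  have hp0 : 0 < p := by linarith
  have hkp : 0 < (k : ℝ) + p := by positivity
  refine one_div_sq_sum_mul_sum_sq_le (f := fun i : ℕ => (((i : ℝ) + p) / p) ^ (p - 1))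
    (by positivity) (fun i => by positivity) (fun i j hij => by dsimp only; gcongr) ?_
  have hwk : (((k : ℝ) + p) / p) ^ (p - 1) = p / ((k : ℝ) + p) * (((k : ℝ) + p) / p) ^ p := by
    rw [Real.rpow_sub_one (by positivity)]; field_simp
  rw [hwk]
  gcongr
  exact rpow_le_sum_rpow_sub_one hp k

open Finset in
theorem stmt_7_general (p : ℝ) (hp1 : 1 ≤ p)
    (a : ℝ)
    (α : ℕ → ℝ) (hα : ∀ i, α i = (1 / a) * (((i : ℝ) + p) / p) ^ (p - 1))
    (A : ℕ → ℝ) (hA : ∀ k, A k = ∑ i ∈ range (k + 1), α i) :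
    ∀ k : ℕ, 1 / (A k) ^ 2 * ∑ i ∈ range (k + 1), (α i) ^ 2 ≤
      2 * p / ((k : ℝ) + p) := by
  intro k
  have hp0 : 0 < p := by linarith
  rw [hA k]
  simp only [hα]
  refine one_div_sq_sum_mul_sum_sq_const_mul_le (1 / a) (by positivity) ?_
  calc _ ≤ p / ((k : ℝ) + p) := one_div_sq_sum_mul_sum_sq_rpow_sub_one_le hp1 k
    _ ≤ 2 * p / ((k : ℝ) + p) := by gcongr; linarith

open Finset in
/-- With the sequences of the SIGM coefficients,
`(1/A_k²)·Σ_{i=0}^k α_i² ≤ 2p/(k+p)` for all `k ≥ 0`. -/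
theorem stmt_7 (p : ℝ) (hp1 : 1 ≤ p) (hp2 : p ≤ 2)
    (a : ℝ) (haa : a = (2 : ℝ) ^ ((2 * p - 1) / 2))
    (α : ℕ → ℝ) (hα : ∀ i, α i = (1 / a) * (((i : ℝ) + p) / p) ^ (p - 1))
    (A : ℕ → ℝ) (hA : ∀ k, A k = ∑ i ∈ range (k + 1), α i) :
    ∀ k : ℕ, 1 / (A k) ^ 2 * ∑ i ∈ range (k + 1), (α i) ^ 2 ≤
      2 * p / ((k : ℝ) + p) :=
  stmt_7_general p hp1 a α hα A hA
end

section
/- Let f be convex on Q with subgradient g(x) ∈ ∂f(x) satisfying the Hölder condition ‖g(x) - g(y)‖_* ≤ L_ν ‖x - y‖^ν with ν ∈ [0,1). Then for any δ > 0, the pair (f(x), g(x)) is a (δ, L)-oracle for f with L = L_ν · [L_ν(1-ν)/(2δ(1+ν))]^{(1-ν)/(1+ν)}, i.e., 0 ≤ f(y) - f(x) - ⟨g(x), y-x⟩ ≤ (L/2)‖x-y‖² + δ for all x, y ∈ Q. -/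
/-!
Along the segment `s ↦ x + s • (y - x)`, the subgradient inequality at the right endpoint
together with the Hölder bound shows that `φ s = f (x + s • (y - x)) - s * g x (y - x)` has
increments `φ b - φ a ≤ Lν ‖y - x‖^(1+ν) (b - a) b^ν`. Summing over a uniform partition of
`[0, 1]`, whose right Riemann sums of `s^ν` are controlled by convexity of `s^(1+ν)`, and letting
the mesh tend to zero gives `f y - f x - g x (y - x) ≤ Lν/(1+ν) ‖y - x‖^(1+ν)`. Weighted AM-GM
with weights `(1+ν)/2` and `(1-ν)/2` then bounds `Lν/(1+ν) t^(1+ν)` by `L/2 t^2 + δ`.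
-/

open Filter Topology

lemma one_add_mul_mul_rpow_le_add_rpow_sub_rpow {ν t h : ℝ} (hν : 0 ≤ ν) (ht : 0 < t)
    (hh : 0 ≤ h) : (1 + ν) * h * t ^ ν ≤ (t + h) ^ (1 + ν) - t ^ (1 + ν) := by
  have bernoulli : 1 + (1 + ν) * (h / t) ≤ (1 + h / t) ^ (1 + ν) :=
    one_add_mul_self_le_rpow_one_add (by linarith [div_nonneg hh ht.le]) (by linarith)
  have hscale : (t + h) ^ (1 + ν) = t ^ (1 + ν) * (1 + h / t) ^ (1 + ν) := by
    rw [← Real.mul_rpow ht.le (by positivity), mul_add, mul_div_cancel₀ _ ht.ne', mul_one]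
  have hexpand : t ^ (1 + ν) * (1 + (1 + ν) * (h / t)) = t ^ (1 + ν) + (1 + ν) * h * t ^ ν := by
    rw [add_comm 1 ν, Real.rpow_add_one ht.ne']
    field_simp
  rw [hscale]
  linarith [mul_le_mul_of_nonneg_left bernoulli (Real.rpow_nonneg ht.le (1 + ν))]

lemma one_add_mul_sum_rpow_le {ν h : ℝ} (hν : 0 ≤ ν) (hh : 0 < h) (n : ℕ) :
    (1 + ν) * ∑ i ∈ Finset.range n, h * ((i + 1) * h) ^ ν ≤ ((n + 1) * h) ^ (1 + ν) := by
  set u : ℕ → ℝ := fun i => ((i + 1) * h) ^ (1 + ν)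
  have hstep : ∀ i ∈ Finset.range n, (1 + ν) * (h * ((i + 1) * h) ^ ν) ≤ u (i + 1) - u i := by
    intro i _
    have htangent :=
      one_add_mul_mul_rpow_le_add_rpow_sub_rpow hν (t := (i + 1) * h) (by positivity) hh.le
    simp only [u]
    push_cast
    rw [← mul_assoc, show ((i : ℝ) + 1 + 1) * h = (i + 1) * h + h by ring]
    exact htangent
  calc (1 + ν) * ∑ i ∈ Finset.range n, h * ((i + 1) * h) ^ ν
      ≤ ∑ i ∈ Finset.range n, (u (i + 1) - u i) := by
        rw [Finset.mul_sum]; exact Finset.sum_le_sum hstep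
    _ = u n - u 0 := Finset.sum_range_sub u n
    _ ≤ u n := sub_le_self _ (Real.rpow_nonneg (by positivity) _)

lemma sub_le_div_one_add_of_sub_le_mul_rpow {φ : ℝ → ℝ} {ν C : ℝ} (hν : 0 ≤ ν) (hC : 0 ≤ C)
    (hφ : ∀ a b, 0 ≤ a → a ≤ b → b ≤ 1 → φ b - φ a ≤ C * (b - a) * b ^ ν) :
    φ 1 - φ 0 ≤ C / (1 + ν) := by
  have hν' : 0 < 1 + ν := by linarith
  have hpartition : ∀ n : ℕ, 0 < n → φ 1 - φ 0 ≤ C * (1 + (n : ℝ)⁻¹) ^ (1 + ν) / (1 + ν) := by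
    intro n hn
    set h : ℝ := (n : ℝ)⁻¹
    have hh : 0 < h := by positivity
    have hnh : (n : ℝ) * h = 1 := mul_inv_cancel₀ (by positivity)
    have hmesh : ∀ i ∈ Finset.range n, φ ((i + 1 : ℕ) * h) - φ (i * h) ≤
        C * (h * ((i + 1) * h) ^ ν) := by
      intro i hi
      have hi : (i : ℝ) + 1 ≤ n := by exact_mod_cast Finset.mem_range.mp hi
      push_cast
      calc φ ((i + 1) * h) - φ (i * h) ≤ C * ((i + 1) * h - i * h) * ((i + 1) * h) ^ ν :=
            hφ _ _ (by positivity) (by nlinarith) (by nlinarith)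
        _ = C * (h * ((i + 1) * h) ^ ν) := by ring
    calc φ 1 - φ 0 = ∑ i ∈ Finset.range n, (φ ((i + 1 : ℕ) * h) - φ (i * h)) := by
          rw [Finset.sum_range_sub (fun i : ℕ => φ (i * h)), Nat.cast_zero, zero_mul, hnh]
      _ ≤ C * ∑ i ∈ Finset.range n, h * ((i + 1) * h) ^ ν := by
          rw [Finset.mul_sum]; exact Finset.sum_le_sum hmesh
      _ ≤ C * (((n + 1) * h) ^ (1 + ν) / (1 + ν)) := by
          gcongr
          rw [le_div_iff₀ hν', mul_comm]
          exact one_add_mul_sum_rpow_le hν hh n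
      _ = C * (1 + h) ^ (1 + ν) / (1 + ν) := by
          rw [add_mul, hnh, one_mul, mul_div_assoc]
  have hlim : Tendsto (fun n : ℕ => C * (1 + (n : ℝ)⁻¹) ^ (1 + ν) / (1 + ν)) atTop
      (𝓝 (C * (1 + 0) ^ (1 + ν) / (1 + ν))) :=
    ((((tendsto_inv_atTop_nhds_zero_nat (𝕜 := ℝ)).const_add 1).rpow_const
      (Or.inr hν'.le)).const_mul C).div_const _
  rw [add_zero, Real.one_rpow, mul_one] at hlim
  exact ge_of_tendsto hlim ((eventually_gt_atTop 0).mono hpartition)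

lemma sub_sub_apply_le_of_holder {E : Type*} [NormedAddCommGroup E] [NormedSpace ℝ E]
    {Q : Set E} (hQ : Convex ℝ Q) {f : E → ℝ} {g : E → E →L[ℝ] ℝ}
    (hsub : ∀ x ∈ Q, ∀ y ∈ Q, f y ≥ f x + g x (y - x)) {ν Lν : ℝ} (hν : 0 ≤ ν) (hLν : 0 ≤ Lν)
    (hHolder : ∀ x ∈ Q, ∀ y ∈ Q, ‖g x - g y‖ ≤ Lν * ‖x - y‖ ^ ν) {x y : E} (hx : x ∈ Q)
    (hy : y ∈ Q) : f y - f x - g x (y - x) ≤ Lν / (1 + ν) * ‖y - x‖ ^ (1 + ν) := by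
  set t := ‖y - x‖
  let z : ℝ → E := fun s => x + s • (y - x)
  have hzQ : ∀ s, 0 ≤ s → s ≤ 1 → z s ∈ Q := fun s hs0 hs1 => hQ.add_smul_sub_mem hx hy ⟨hs0, hs1⟩
  have hincr : ∀ a b, 0 ≤ a → a ≤ b → b ≤ 1 →
      (f (z b) - b * g x (y - x)) - (f (z a) - a * g x (y - x)) ≤
        Lν * t ^ (1 + ν) * (b - a) * b ^ ν := by
    intro a b ha hab hb
    have hza := hzQ a ha (hab.trans hb)
    have hzb := hzQ b (ha.trans hab) hb
    have hsupport : f (z b) - f (z a) ≤ (b - a) * g (z b) (y - x) := by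
      have := hsub _ hzb _ hza
      have hza_sub : z a - z b = (a - b) • (y - x) := by simp only [z]; module
      rw [hza_sub, map_smul, smul_eq_mul] at this
      linarith
    have hholder : (g (z b) - g x) (y - x) ≤ Lν * (b * t) ^ ν * t := by
      calc (g (z b) - g x) (y - x) ≤ ‖g (z b) - g x‖ * t :=
            (le_abs_self _).trans ((g (z b) - g x).le_opNorm _)
        _ ≤ Lν * ‖z b - x‖ ^ ν * t := by gcongr; exact hHolder _ hzb _ hx
        _ = Lν * (b * t) ^ ν * t := by
            simp only [z, add_sub_cancel_left, norm_smul, Real.norm_of_nonneg (ha.trans hab), t]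
    have hsplit : (f (z b) - b * g x (y - x)) - (f (z a) - a * g x (y - x)) ≤
        (b - a) * (g (z b) - g x) (y - x) := by
      rw [sub_apply, mul_sub]; linarith
    calc _ ≤ (b - a) * (g (z b) - g x) (y - x) := hsplit
      _ ≤ (b - a) * (Lν * (b * t) ^ ν * t) := by gcongr
      _ = Lν * t ^ (1 + ν) * (b - a) * b ^ ν := by
          rw [Real.mul_rpow (ha.trans hab) (norm_nonneg _),
            Real.rpow_add' (norm_nonneg _) (by linarith), Real.rpow_one]
          ring
  have hsegment := sub_le_div_one_add_of_sub_le_mul_rpow hν (by positivity) hincr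
  simp only [z, zero_smul, one_smul, add_zero, zero_mul, sub_zero, one_mul, add_sub_cancel]
    at hsegment
  linarith [show Lν * t ^ (1 + ν) / (1 + ν) = Lν / (1 + ν) * t ^ (1 + ν) by ring]

noncomputable def holderOracleConstant (Lν ν δ : ℝ) : ℝ :=
  Lν * (Lν * (1 - ν) / (2 * δ * (1 + ν))) ^ ((1 - ν) / (1 + ν))

lemma mul_div_rpow_rpow_mul_rpow_eq {M B θ : ℝ} (hM : 0 < M) (hB : 0 < B) (hθ : 0 < θ) :
    (M * (M / B) ^ ((1 - θ) / θ)) ^ θ * B ^ (1 - θ) = M := by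
  rw [Real.mul_rpow hM.le (by positivity), ← Real.rpow_mul (by positivity),
    div_mul_cancel₀ _ hθ.ne', Real.div_rpow hM.le hB.le, mul_assoc,
    div_mul_cancel₀ _ (by positivity), ← Real.rpow_add hM, add_sub_cancel, Real.rpow_one]

lemma div_one_add_mul_rpow_le_holderOracleConstant {ν Lν δ t : ℝ} (hν0 : -1 < ν) (hν1 : ν < 1)
    (hLν : 0 < Lν) (hδ : 0 < δ) (ht : 0 ≤ t) :
    Lν / (1 + ν) * t ^ (1 + ν) ≤ holderOracleConstant Lν ν δ / 2 * t ^ 2 + δ := by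
  set θ : ℝ := (1 + ν) / 2
  set M : ℝ := Lν / (1 + ν)
  set B : ℝ := 2 * δ / (1 - ν)
  have hν' : 0 < 1 + ν := by linarith
  have hν'' : 0 < 1 - ν := by linarith
  have hA : holderOracleConstant Lν ν δ / (1 + ν) = M * (M / B) ^ ((1 - θ) / θ) := by
    have hexp : (1 - θ) / θ = (1 - ν) / (1 + ν) := by simp only [θ]; field_simp; ring
    have hbase : M / B = Lν * (1 - ν) / (2 * δ * (1 + ν)) := by simp only [M, B]; field_simp
    rw [hexp, hbase, holderOracleConstant]; ring
  have hgeom : (M * (M / B) ^ ((1 - θ) / θ)) ^ θ * B ^ (1 - θ) = M :=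
    mul_div_rpow_rpow_mul_rpow_eq (by positivity) (by positivity) (by positivity)
  have hamgm := Real.geom_mean_le_arith_mean2_weighted (w₁ := θ) (w₂ := 1 - θ)
    (p₁ := holderOracleConstant Lν ν δ / (1 + ν) * t ^ 2) (p₂ := B) (by positivity)
    (by simp only [θ]; linarith) (by rw [hA]; positivity) (by positivity) (by ring)
  have ht2 : (t ^ 2) ^ θ = t ^ (1 + ν) := by
    rw [← Real.rpow_natCast, ← Real.rpow_mul ht]
    congr 1
    simp only [θ]; push_cast; ring
  calc Lν / (1 + ν) * t ^ (1 + ν)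
      = (holderOracleConstant Lν ν δ / (1 + ν) * t ^ 2) ^ θ * B ^ (1 - θ) := by
        rw [Real.mul_rpow (by rw [hA]; positivity) (by positivity), ht2, mul_right_comm, hA,
          hgeom]
    _ ≤ θ * (holderOracleConstant Lν ν δ / (1 + ν) * t ^ 2) + (1 - θ) * B := hamgm
    _ = holderOracleConstant Lν ν δ / 2 * t ^ 2 + δ := by
        simp only [θ, B]; field_simp; ring

theorem stmt_11_general {E : Type*} [NormedAddCommGroup E] [NormedSpace ℝ E]
    (Q : Set E) (hQ : Convex ℝ Q)
    (f : E → ℝ) (g : E → (E →L[ℝ] ℝ))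
    (hsub : ∀ x ∈ Q, ∀ y ∈ Q, f y ≥ f x + g x (y - x))
    (ν Lν : ℝ) (hν0 : 0 ≤ ν) (hν1 : ν < 1) (hLν : 0 < Lν)
    (hHolder : ∀ x ∈ Q, ∀ y ∈ Q, ‖g x - g y‖ ≤ Lν * ‖x - y‖ ^ ν)
    (δ : ℝ) (hδ : 0 < δ)
    (L : ℝ) (hLdef : L = Lν * (Lν * (1 - ν) / (2 * δ * (1 + ν))) ^ ((1 - ν) / (1 + ν))) :
    ∀ x ∈ Q, ∀ y ∈ Q,
      0 ≤ f y - f x - g x (y - x) ∧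
      f y - f x - g x (y - x) ≤ L / 2 * ‖x - y‖ ^ 2 + δ := by
  intro x hx y hy
  refine ⟨by linarith [hsub x hx y hy], ?_⟩
  rw [hLdef, norm_sub_rev]
  calc f y - f x - g x (y - x) ≤ Lν / (1 + ν) * ‖y - x‖ ^ (1 + ν) :=
        sub_sub_apply_le_of_holder hQ hsub hν0 hLν.le hHolder hx hy
    _ ≤ holderOracleConstant Lν ν δ / 2 * ‖y - x‖ ^ 2 + δ :=
        div_one_add_mul_rpow_le_holderOracleConstant (by linarith) hν1 hLν hδ (norm_nonneg _)

/-- A convex function with `ν`-Hölder continuous subgradients admits,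
for any `δ > 0`, a `(δ, L)`-oracle with
`L = L_ν (L_ν(1-ν)/(2δ(1+ν)))^((1-ν)/(1+ν))`. -/
theorem stmt_11 {E : Type*} [NormedAddCommGroup E] [NormedSpace ℝ E]
    [FiniteDimensional ℝ E] (Q : Set E) (hQc : IsClosed Q) (hQ : Convex ℝ Q)
    (f : E → ℝ) (g : E → (E →L[ℝ] ℝ))
    (hsub : ∀ x ∈ Q, ∀ y ∈ Q, f y ≥ f x + g x (y - x))
    (ν Lν : ℝ) (hν0 : 0 ≤ ν) (hν1 : ν < 1) (hLν : 0 < Lν)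
    (hHolder : ∀ x ∈ Q, ∀ y ∈ Q, ‖g x - g y‖ ≤ Lν * ‖x - y‖ ^ ν)
    (δ : ℝ) (hδ : 0 < δ)
    (L : ℝ) (hLdef : L = Lν * (Lν * (1 - ν) / (2 * δ * (1 + ν))) ^ ((1 - ν) / (1 + ν))) :
    ∀ x ∈ Q, ∀ y ∈ Q,
      0 ≤ f y - f x - g x (y - x) ∧
      f y - f x - g x (y - x) ≤ L / 2 * ‖x - y‖ ^ 2 + δ :=
  stmt_11_general Q hQ f g hsub ν Lν hν0 hν1 hLν hHolder δ hδ L hLdef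
end
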